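/- arXiv:2303.05368 — 2 statements merged into one kernel-verified Lean document; each statement's English description precedes it below -/
import Mathlib

section
/- Let X be a nonempty finite type with |X| ≥ 2, Y a finite type, v : X → EuclideanSpace ℂ Y a family of unit vectors, x* ∈ X, and let Ψ, Ψ' be the public-key state and the punctured public-key state. For every natural number p, the Hermitian matrix |Ψ^{⊗p}⟩⟨Ψ^{⊗p}| − |Ψ'^{⊗p}⟩⟨Ψ'^{⊗p}| (indexed by Fin p → X × Y) has trace norm equal to 2 · Real.sqrt(1 − ((|X| − 1)/|X|)^p); equivalently, the trace distance between the pure states Ψ^{⊗p} and Ψ'^{⊗p} equals √(1 − (1 − 1/|X|)^p). -/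
/-- The public-key state `Ψ(x,y) = |X|^{-1/2} · (v x)(y)`. -/
noncomputable def pubKey (X Y : Type) [Fintype X] [Fintype Y]
    (v : X → EuclideanSpace ℂ Y) : EuclideanSpace ℂ (X × Y) :=
  WithLp.toLp 2 fun p => ((Real.sqrt (Fintype.card X))⁻¹ : ℂ) * v p.1 p.2

/-- The punctured public-key state `Ψ'`, vanishing on the branch `x*` and renormalized. -/
noncomputable def puncKey (X Y : Type) [Fintype X] [Fintype Y] [DecidableEq X]
    (v : X → EuclideanSpace ℂ Y) (xstar : X) : EuclideanSpace ℂ (X × Y) :=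
  WithLp.toLp 2 fun p => if p.1 = xstar then 0
    else ((Real.sqrt ((Fintype.card X : ℝ) - 1))⁻¹ : ℂ) * v p.1 p.2

/-- The `p`-fold tensor power of `ψ : EuclideanSpace ℂ α`. -/
noncomputable def tensorPow {α : Type} [Fintype α] (ψ : EuclideanSpace ℂ α) (p : ℕ) :
    EuclideanSpace ℂ (Fin p → α) :=
  WithLp.toLp 2 fun a => ∏ i, ψ (a i)


/-!
For unit vectors `ψ, φ`, the Hermitian matrix `|ψ⟩⟨ψ| - |φ⟩⟨φ|` has trace `0` and rank at most `2`,
so its nonzero eigenvalues are `±λ`; since `tr M² = 2 - 2 |⟨ψ, φ⟩|²`, its trace norm is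
`2 √(1 - |⟨ψ, φ⟩|²)`. Tensor powers multiply overlaps, and `⟨Ψ, Ψ'⟩ = √((|X| - 1) / |X|)` because
both states are superpositions `∑ₓ aₓ |x⟩|v x⟩` of the same orthonormal family, so
`|⟨Ψ^{⊗p}, Ψ'^{⊗p}⟩|² = ((|X| - 1) / |X|)^p`.
-/
open Matrix Finset
open scoped ComplexConjugate InnerProductSpace

theorem Matrix.rank_sub_le {m n K : Type*} [Fintype m] [Fintype n] [Field K]
    (A B : Matrix m n K) : (A - B).rank ≤ A.rank + B.rank := by
  have hrange : LinearMap.range (A - B).mulVecLin ≤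
      LinearMap.range A.mulVecLin ⊔ LinearMap.range B.mulVecLin := by
    rintro _ ⟨x, rfl⟩
    rw [mulVecLin_apply, sub_mulVec]
    exact sub_mem (Submodule.mem_sup_left ⟨x, rfl⟩) (Submodule.mem_sup_right ⟨x, rfl⟩)
  exact (Submodule.finrank_mono hrange).trans
    (Submodule.finrank_add_le_finrank_add_finrank _ _)

theorem Matrix.IsHermitian.trace_mul_self {n 𝕜 : Type*} [Fintype n] [DecidableEq n] [RCLike 𝕜]
    {A : Matrix n n 𝕜} (hA : A.IsHermitian) :
    (A * A).trace = ∑ i, (hA.eigenvalues i : 𝕜) ^ 2 := by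
  conv_lhs => rw [hA.spectral_theorem, ← map_mul, Unitary.conjStarAlgAut_apply, trace_mul_cycle,
    Unitary.coe_star_mul_self, one_mul, diagonal_mul_diagonal, trace_diagonal]
  simp [sq]

theorem sq_sum_abs_eq_two_mul_sum_sq {ι : Type*} [Fintype ι] (f : ι → ℝ) (hf : ∑ i, f i = 0)
    (hsupp : #{i | f i ≠ 0} ≤ 2) : (∑ i, |f i|) ^ 2 = 2 * ∑ i, f i ^ 2 := by
  classical
  set S : Finset ι := {i | f i ≠ 0}
  have hS {g : ι → ℝ} (hg : ∀ i, f i = 0 → g i = 0) : ∑ i ∈ S, g i = ∑ i, g i :=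
    sum_filter_of_ne fun i _ hi h0 => hi (hg i h0)
  rw [← hS fun i h => h] at hf
  rw [← hS fun i h => by simp [h], ← hS fun i h => by simp [h]]
  interval_cases h : #S
  · simp [card_eq_zero.mp h]
  · obtain ⟨i, hi⟩ := card_eq_one.mp h
    simp only [hi, sum_singleton] at hf
    have hfi : i ∈ S := hi ▸ mem_singleton_self i
    simp only [S, mem_filter_univ] at hfi
    exact absurd hf hfi
  · obtain ⟨i, j, hij, hi⟩ := card_eq_two.mp h
    simp only [hi, sum_pair hij] at hf ⊢
    rw [eq_neg_of_add_eq_zero_right hf, abs_neg, neg_sq, ← sq_abs (f i)]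
    ring

theorem norm_eq_one_of_inner_self_eq_one {𝕜 E : Type*} [RCLike 𝕜] [NormedAddCommGroup E]
    [InnerProductSpace 𝕜 E] {x : E} (h : ⟪x, x⟫_𝕜 = 1) : ‖x‖ = 1 := by
  rw [norm_eq_sqrt_re_inner (𝕜 := 𝕜), h, RCLike.one_re, Real.sqrt_one]

section ketBra

variable {n 𝕜 : Type*} [RCLike 𝕜]

def ketBra (ψ : EuclideanSpace 𝕜 n) : Matrix n n 𝕜 :=
  Matrix.of fun a b => ψ a * conj (ψ b)

theorem isHermitian_ketBra (ψ : EuclideanSpace 𝕜 n) : (ketBra ψ).IsHermitian := by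
  ext a b
  simp [ketBra, mul_comm]

variable [Fintype n]

theorem rank_ketBra_le (ψ : EuclideanSpace 𝕜 n) : (ketBra ψ).rank ≤ 1 :=
  rank_vecMulVec_le _ _

theorem trace_ketBra (ψ : EuclideanSpace 𝕜 n) : (ketBra ψ).trace = (‖ψ‖ ^ 2 : ℝ) := by
  simp [trace, ketBra, RCLike.mul_conj, EuclideanSpace.norm_sq_eq]

theorem trace_ketBra_mul_ketBra (ψ φ : EuclideanSpace 𝕜 n) :
    (ketBra ψ * ketBra φ).trace = (‖⟪ψ, φ⟫_𝕜‖ ^ 2 : ℝ) := by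
  have h : (ketBra ψ * ketBra φ).trace = ⟪ψ, φ⟫_𝕜 * conj ⟪ψ, φ⟫_𝕜 := by
    simp only [trace, Matrix.diag, mul_apply, ketBra, of_apply, PiLp.inner_apply,
      RCLike.inner_apply, map_sum, map_mul, RCLike.conj_conj, sum_mul, mul_sum]
    exact sum_congr rfl fun a _ => sum_congr rfl fun b _ => by ring
  rw [h, RCLike.mul_conj, RCLike.ofReal_pow]

end ketBra

theorem sum_abs_eigenvalues_ketBra_sub_ketBra {n 𝕜 : Type*} [Fintype n] [DecidableEq n]
    [RCLike 𝕜] {ψ φ : EuclideanSpace 𝕜 n} (hψ : ‖ψ‖ = 1) (hφ : ‖φ‖ = 1)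
    (hM : (ketBra ψ - ketBra φ).IsHermitian) :
    ∑ i, |hM.eigenvalues i| = 2 * √(1 - ‖⟪ψ, φ⟫_𝕜‖ ^ 2) := by
  set μ := hM.eigenvalues
  have hsum : ∑ i, μ i = 0 := by
    have h := hM.trace_eq_sum_eigenvalues
    rw [trace_sub, trace_ketBra, trace_ketBra, hψ, hφ, sub_self] at h
    exact_mod_cast h.symm
  have hsq : ∑ i, μ i ^ 2 = 2 * (1 - ‖⟪ψ, φ⟫_𝕜‖ ^ 2) := by
    have h := hM.trace_mul_self
    rw [sub_mul, mul_sub, mul_sub, trace_sub, trace_sub, trace_sub, trace_ketBra_mul_ketBra,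
      trace_ketBra_mul_ketBra, trace_ketBra_mul_ketBra, trace_ketBra_mul_ketBra,
      inner_self_eq_one_of_norm_eq_one hψ, inner_self_eq_one_of_norm_eq_one hφ,
      norm_inner_symm φ ψ, norm_one] at h
    have h' : ((∑ i, μ i ^ 2 : ℝ) : 𝕜) = ((2 * (1 - ‖⟪ψ, φ⟫_𝕜‖ ^ 2) : ℝ) : 𝕜) := by
      push_cast at h ⊢
      rw [← h]
      ring
    exact_mod_cast h'
  have hsupp : #{i | μ i ≠ 0} ≤ 2 := by
    rw [← Fintype.card_subtype, ← hM.rank_eq_card_non_zero_eigs]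
    exact (rank_sub_le _ _).trans (add_le_add (rank_ketBra_le ψ) (rank_ketBra_le φ))
  rw [← Real.sqrt_sq (sum_nonneg fun i _ => abs_nonneg (μ i)),
    sq_sum_abs_eq_two_mul_sum_sq μ hsum hsupp, hsq, ← mul_assoc,
    Real.sqrt_mul (by norm_num), show (2 * 2 : ℝ) = 2 ^ 2 by norm_num,
    Real.sqrt_sq zero_le_two]

section tensorPow

variable {α : Type} [Fintype α]

theorem inner_tensorPow (ψ φ : EuclideanSpace ℂ α) (p : ℕ) :
    ⟪tensorPow ψ p, tensorPow φ p⟫_ℂ = ⟪ψ, φ⟫_ℂ ^ p := by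
  simp only [PiLp.inner_apply, RCLike.inner_apply, tensorPow, map_prod, ← prod_mul_distrib,
    Fintype.sum_pow]

theorem norm_tensorPow (ψ : EuclideanSpace ℂ α) (p : ℕ) : ‖tensorPow ψ p‖ = ‖ψ‖ ^ p := by
  rw [norm_eq_sqrt_re_inner (𝕜 := ℂ), inner_tensorPow, inner_self_eq_norm_sq_to_K, ← pow_mul,
    ← RCLike.ofReal_pow, RCLike.ofReal_re, mul_comm, pow_mul, Real.sqrt_sq (by positivity)]

end tensorPow

section keys

variable {X Y : Type} [Fintype X] [Fintype Y] {v : X → EuclideanSpace ℂ Y}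

def superposition (a : X → ℂ) (v : X → EuclideanSpace ℂ Y) : EuclideanSpace ℂ (X × Y) :=
  WithLp.toLp 2 fun q => a q.1 * v q.1 q.2

theorem inner_superposition (hv : ∀ x, ‖v x‖ = 1) (a b : X → ℂ) :
    ⟪superposition a v, superposition b v⟫_ℂ = ∑ x, conj (a x) * b x := by
  have hv' (x : X) : ∑ y, v x y * conj (v x y) = 1 := by
    simpa only [PiLp.inner_apply, RCLike.inner_apply]
      using inner_self_eq_one_of_norm_eq_one (𝕜 := ℂ) (hv x)
  simp only [PiLp.inner_apply, RCLike.inner_apply, superposition, Fintype.sum_prod_type]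
  refine sum_congr rfl fun x _ => ?_
  rw [← mul_one (conj (a x) * b x), ← hv' x, mul_sum]
  exact sum_congr rfl fun y _ => by rw [map_mul]; ring

theorem pubKey_eq_superposition :
    pubKey X Y v = superposition (fun _ => ((√(Fintype.card X))⁻¹ : ℂ)) v := rfl

theorem puncKey_eq_superposition [DecidableEq X] (xstar : X) :
    puncKey X Y v xstar = superposition
      (fun x => if x = xstar then 0 else ((√((Fintype.card X : ℝ) - 1))⁻¹ : ℂ)) v := by
  ext q
  simp [puncKey, superposition, ite_mul]

theorem norm_pubKey [Nonempty X] (hv : ∀ x, ‖v x‖ = 1) : ‖pubKey X Y v‖ = 1 := by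
  refine norm_eq_one_of_inner_self_eq_one (𝕜 := ℂ) ?_
  rw [pubKey_eq_superposition, inner_superposition hv]
  simp only [← Complex.ofReal_inv, Complex.conj_ofReal, sum_const, card_univ, nsmul_eq_mul]
  have hn : (0 : ℝ) < Fintype.card X := Nat.cast_pos.mpr Fintype.card_pos
  have h : (Fintype.card X : ℝ) * ((√(Fintype.card X))⁻¹ * (√(Fintype.card X))⁻¹) = 1 := by
    rw [← mul_inv, Real.mul_self_sqrt hn.le, mul_inv_cancel₀ hn.ne']
  exact_mod_cast h

theorem card_sub_one_pos (hX : 2 ≤ Fintype.card X) : (0 : ℝ) < Fintype.card X - 1 := by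
  rw [sub_pos, Nat.one_lt_cast]
  omega

variable [DecidableEq X] (xstar : X)

theorem norm_puncKey (hv : ∀ x, ‖v x‖ = 1) (hX : 2 ≤ Fintype.card X) :
    ‖puncKey X Y v xstar‖ = 1 := by
  refine norm_eq_one_of_inner_self_eq_one (𝕜 := ℂ) ?_
  rw [puncKey_eq_superposition, inner_superposition hv]
  simp only [← Complex.ofReal_inv, apply_ite conj, map_zero, Complex.conj_ofReal, mul_ite,
    mul_zero, ite_mul, zero_mul, sum_ite, sum_const_zero, filter_ne', mem_erase, ne_eq,
    not_true_eq_false, mem_univ, and_true, not_false_eq_true, erase_eq_of_notMem, sum_const,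
    card_erase_of_mem, card_univ, nsmul_eq_mul, zero_add]
  have hn := card_sub_one_pos hX
  have h : ((Fintype.card X : ℝ) - 1) *
      ((√(Fintype.card X - 1))⁻¹ * (√(Fintype.card X - 1))⁻¹) = 1 := by
    rw [← mul_inv, Real.mul_self_sqrt hn.le, mul_inv_cancel₀ hn.ne']
  push_cast [Nat.cast_sub (one_le_two.trans hX)]
  exact_mod_cast h

theorem inner_pubKey_puncKey (hv : ∀ x, ‖v x‖ = 1) (hX : 2 ≤ Fintype.card X) :
    ⟪pubKey X Y v, puncKey X Y v xstar⟫_ℂ =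
      (√(((Fintype.card X : ℝ) - 1) / Fintype.card X) : ℝ) := by
  rw [puncKey_eq_superposition, pubKey_eq_superposition, inner_superposition hv]
  simp only [← Complex.ofReal_inv, Complex.conj_ofReal, mul_ite, mul_zero, sum_ite,
    sum_const_zero, filter_ne', sum_const, card_erase_of_mem (mem_univ _), card_univ,
    nsmul_eq_mul, zero_add]
  have hn := card_sub_one_pos hX
  have h : ((Fintype.card X : ℝ) - 1) * ((√(Fintype.card X))⁻¹ * (√(Fintype.card X - 1))⁻¹) =
      √((Fintype.card X - 1) / Fintype.card X) := by
    rw [Real.sqrt_div' _ (Nat.cast_nonneg _)]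
    field_simp
    rw [Real.sq_sqrt hn.le]
  push_cast [Nat.cast_sub (one_le_two.trans hX)]
  exact_mod_cast h

end keys

theorem stmt3 (X Y : Type) [Fintype X] [Nonempty X] [Fintype Y]
    [DecidableEq X] [DecidableEq Y]
    (v : X → EuclideanSpace ℂ Y) (hv : ∀ x, ‖v x‖ = 1)
    (xstar : X) (hX : 2 ≤ Fintype.card X) (p : ℕ) :
    ∃ hM : (Matrix.of fun a b : Fin p → X × Y =>
        tensorPow (pubKey X Y v) p a *
            (starRingEnd ℂ) (tensorPow (pubKey X Y v) p b) -
          tensorPow (puncKey X Y v xstar) p a *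
            (starRingEnd ℂ) (tensorPow (puncKey X Y v xstar) p b)).IsHermitian,
      (∑ i, |hM.eigenvalues i| =
        2 * Real.sqrt (1 - (((Fintype.card X : ℝ) - 1) / (Fintype.card X : ℝ)) ^ p)) ∧
      (1 / 2 * ∑ i, |hM.eigenvalues i| =
        Real.sqrt (1 - (1 - 1 / (Fintype.card X : ℝ)) ^ p)) := by
  have hM := (isHermitian_ketBra (tensorPow (pubKey X Y v) p)).sub
    (isHermitian_ketBra (tensorPow (puncKey X Y v xstar) p))
  have hratio : 0 ≤ ((Fintype.card X : ℝ) - 1) / Fintype.card X :=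
    div_nonneg (sub_nonneg.mpr (Nat.one_le_cast.mpr Fintype.card_pos)) (Nat.cast_nonneg _)
  have hoverlap : ‖⟪tensorPow (pubKey X Y v) p, tensorPow (puncKey X Y v xstar) p⟫_ℂ‖ ^ 2 =
      (((Fintype.card X : ℝ) - 1) / Fintype.card X) ^ p := by
    rw [inner_tensorPow, inner_pubKey_puncKey xstar hv hX, norm_pow, Complex.norm_real,
      Real.norm_of_nonneg (Real.sqrt_nonneg _), ← pow_mul, mul_comm, pow_mul,
      Real.sq_sqrt hratio]
  have htrace := sum_abs_eigenvalues_ketBra_sub_ketBra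
    (by rw [norm_tensorPow, norm_pubKey hv, one_pow])
    (by rw [norm_tensorPow, norm_puncKey xstar hv hX, one_pow]) hM
  rw [hoverlap] at htrace
  refine ⟨hM, htrace, ?_⟩
  -- the statement's matrix is `ketBra _ - ketBra _` unfolded
  change 1 / 2 * ∑ i, |hM.eigenvalues i| = _
  rw [htrace, one_sub_div (Nat.cast_pos.mpr Fintype.card_pos).ne']
  ring
end

section
/- Let q : Polynomial ℕ be any polynomial with natural-number coefficients, and define f : ℕ → ℝ by f(λ) = Real.sqrt(1 − (1 − (1/2)^λ)^{q.eval λ}). Then f is negligible: for every natural number c, the sequence λ ↦ (λ : ℝ)^c · f(λ) tends to 0 as λ → ∞. -/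
theorem stmt5 (q : Polynomial ℕ) :
    ∀ c : ℕ, Filter.Tendsto
      (fun lam : ℕ => (lam : ℝ) ^ c *
        Real.sqrt (1 - (1 - (1 / 2 : ℝ) ^ lam) ^ (q.eval lam)))
      Filter.atTop (nhds 0) := by
  intro c
  set d := q.natDegree with hd
  set M := ∑ i ∈ Finset.range (d + 1), q.coeff i with hM
  set r : ℝ := Real.sqrt (1 / 2) with hr
  have hr0 : 0 ≤ r := Real.sqrt_nonneg _
  have hr1 : r < 1 := by
    rw [hr, show (1 : ℝ) = Real.sqrt 1 by simp]
    exact Real.sqrt_lt_sqrt (by norm_num) (by norm_num)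
  -- eval bound
  have heval : ∀ n : ℕ, 1 ≤ n → q.eval n ≤ M * n ^ d := by
    intro n hn
    rw [Polynomial.eval_eq_sum_range, hM, Finset.sum_mul]
    exact Finset.sum_le_sum fun i hi => by
      exact Nat.mul_le_mul_left _ (Nat.pow_le_pow_right hn
        (Nat.lt_succ_iff.mp (Finset.mem_range.mp hi)))
  have hsp : ∀ n : ℕ, Real.sqrt ((1 / 2 : ℝ) ^ n) = r ^ n := by
    intro n
    induction n with
    | zero => simp
    | succ k ih =>
      rw [pow_succ, pow_succ, Real.sqrt_mul (by positivity), ih, hr]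
  have key : Filter.Tendsto (fun n : ℕ => (M : ℝ) * ((n : ℝ) ^ (c + d) * r ^ n))
      Filter.atTop (nhds 0) := by
    have := (tendsto_pow_const_mul_const_pow_of_lt_one (c + d) hr0 hr1).const_mul (M : ℝ)
    simpa using this
  apply squeeze_zero' (g := fun n : ℕ => (M : ℝ) * ((n : ℝ) ^ (c + d) * r ^ n))
  · filter_upwards with n
    have hx0 : (0 : ℝ) ≤ (1 / 2 : ℝ) ^ n := by positivity
    have hx1 : (1 / 2 : ℝ) ^ n ≤ 1 := pow_le_one₀ (by norm_num) (by norm_num)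
    have h1 : (1 - (1 / 2 : ℝ) ^ n) ^ (q.eval n) ≤ 1 :=
      pow_le_one₀ (by linarith) (by linarith)
    positivity
  · filter_upwards [Filter.eventually_ge_atTop 1] with n hn
    set x : ℝ := (1 / 2 : ℝ) ^ n with hxdef
    set m : ℕ := q.eval n with hm
    have hx0 : (0 : ℝ) ≤ x := by positivity
    have hx1 : x ≤ 1 := pow_le_one₀ (by norm_num) (by norm_num)
    -- Bernoulli: 1 - m*x ≤ (1-x)^m
    have hbern : 1 - (m : ℝ) * x ≤ (1 - x) ^ m := by
      have := one_add_mul_le_pow (a := -x) (by linarith) m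
      simpa [sub_eq_add_neg, mul_comm, mul_neg] using this
    have hle : 1 - (1 - x) ^ m ≤ (m : ℝ) * x := by linarith
    have hsq : Real.sqrt (1 - (1 - x) ^ m) ≤ Real.sqrt ((m : ℝ) * x) :=
      Real.sqrt_le_sqrt hle
    have hsqm : Real.sqrt ((m : ℝ) * x) ≤ (m : ℝ) * r ^ n := by
      rw [Real.sqrt_mul (by positivity), hxdef, hsp n]
      have h1 : Real.sqrt (m : ℝ) ≤ (m : ℝ) := by
        rcases Nat.eq_zero_or_pos m with h | h
        · simp [h]
        · calc Real.sqrt (m : ℝ) ≤ Real.sqrt ((m : ℝ) * (m : ℝ)) :=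
                Real.sqrt_le_sqrt (le_mul_of_one_le_left (by positivity) (by exact_mod_cast h))
            _ = (m : ℝ) := Real.sqrt_mul_self (by positivity)
      exact mul_le_mul h1 le_rfl (by positivity) (by positivity)
    have hmn : (m : ℝ) ≤ (M : ℝ) * (n : ℝ) ^ d := by
      exact_mod_cast heval n hn
    calc (n : ℝ) ^ c * Real.sqrt (1 - (1 - x) ^ m)
        ≤ (n : ℝ) ^ c * ((m : ℝ) * r ^ n) := by
          have := hsq.trans hsqm
          exact mul_le_mul_of_nonneg_left this (by positivity)
      _ ≤ (n : ℝ) ^ c * ((M : ℝ) * (n : ℝ) ^ d * r ^ n) := by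
          gcongr
      _ = (M : ℝ) * ((n : ℝ) ^ (c + d) * r ^ n) := by ring
  exact key
end
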